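/- arXiv:2510.14124 — 2 statements merged into one kernel-verified Lean document; each statement's English description precedes it below -/
import Mathlib

section
/- For every nonnegative integer a, the generating function identity ∑_{N≥0} p(2N - (2a+1), 4, N) z^N = z^{a+1}(1 + z - z^{a+1}) / ((1-z)^2 (1-z^2)(1-z^3)) holds as an identity of formal power series. -/
/-! Write n = 2N - (2a+1). Since n ≤ 2N + 1, a partition of n has at most one part exceeding N,
and deleting it leaves a partition of some j < n - N; so
p(n,4,N) = p(n,≤4) - ∑_{j < N-2a-1} p(j,≤3), where p(n,≤m) counts partitions into at most m parts.
Subtracting one from every part of a partition with exactly m+1 parts gives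
p(n,≤m+1) = p(n-m-1,≤m+1) + p(n,≤m), i.e. (1 - z^{m+1}) ∑ p(n,≤m+1) z^n = ∑ p(n,≤m) z^n.
Applied to the odd bisection of p(·,≤4) and to the partial sums of p(·,≤3), these recurrences give
∑_k p(2k+1,≤4) z^k = (1+z)/D and ∑_j (∑_{i<j} p(i,≤3)) z^j = z/D with D = (1-z)^2 (1-z^2)(1-z^3). -/

/-- `pBdd n m N` is the number of partitions of `n` into at most `m` parts,
each part at most `N`; it is `0` for negative `n`. -/
noncomputable def pBdd (n : ℤ) (m N : ℕ) : ℕ :=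
  if 0 ≤ n then
    Nat.card {π : Nat.Partition n.toNat //
      Multiset.card π.parts ≤ m ∧ ∀ i ∈ π.parts, i ≤ N}
  else 0

/-- `pAtMost n m` is the number of partitions of `n` into at most `m` parts;
it is `0` for negative `n`. -/
noncomputable def pAtMost (n : ℤ) (m : ℕ) : ℕ :=
  if 0 ≤ n then
    Nat.card {π : Nat.Partition n.toNat // Multiset.card π.parts ≤ m}
  else 0

open Multiset

lemma Nat.card_subtype_eq_card_and_add_card_and_not {α : Type*} [Finite α] (p q : α → Prop) :
    Nat.card {x // p x} = Nat.card {x // p x ∧ q x} + Nat.card {x // p x ∧ ¬ q x} := by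
  classical
  have := Fintype.ofFinite α
  simp only [Nat.card_eq_fintype_card, Fintype.card_subtype, ← Finset.filter_filter]
  exact (Finset.card_filter_add_card_filter_not _).symm

namespace Nat.Partition

lemma card_parts_le {n : ℕ} (π : n.Partition) : card π.parts ≤ n := by
  simpa [π.parts_sum] using card_nsmul_le_sum (fun x hx => π.parts_pos hx)

def shrinkParts (s : Multiset ℕ) : Multiset ℕ := (s.filter (1 < ·)).map (· - 1)

def growParts (k : ℕ) (t : Multiset ℕ) : Multiset ℕ := t.map (· + 1) + replicate (k - card t) 1

lemma zero_notMem_shrinkParts (s : Multiset ℕ) : 0 ∉ shrinkParts s := by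
  simp only [shrinkParts, mem_map, mem_filter]
  omega

lemma zero_notMem_growParts (k : ℕ) (t : Multiset ℕ) : 0 ∉ growParts k t := by
  simp only [growParts, mem_add, mem_map, mem_replicate]
  omega

lemma card_shrinkParts_le (s : Multiset ℕ) : card (shrinkParts s) ≤ card s := by
  simpa [shrinkParts] using card_le_card (filter_le _ s)

lemma card_growParts {k : ℕ} {t : Multiset ℕ} (h : card t ≤ k) : card (growParts k t) = k := by
  simp only [growParts, card_add, card_map, card_replicate]
  omega

lemma sum_growParts {k : ℕ} {t : Multiset ℕ} (h : card t ≤ k) :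
    (growParts k t).sum = t.sum + k := by
  simp only [growParts, sum_add, sum_map_add, map_id', map_const', sum_replicate, smul_eq_mul]
  omega

lemma shrinkParts_growParts (k : ℕ) {t : Multiset ℕ} (ht : 0 ∉ t) :
    shrinkParts (growParts k t) = t := by
  have hones : (replicate (k - card t) 1).filter (1 < ·) = 0 :=
    filter_eq_nil.2 fun x hx => by simp [eq_of_mem_replicate hx]
  have hpos : (t.map (· + 1)).filter (1 < ·) = t.map (· + 1) :=
    filter_eq_self.2 fun x hx => by
      obtain ⟨y, hy, rfl⟩ := mem_map.1 hx
      have : y ≠ 0 := fun h => ht (h ▸ hy)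
      omega
  simp [shrinkParts, growParts, filter_add, hones, hpos, map_map]

lemma growParts_shrinkParts {s : Multiset ℕ} (hs : 0 ∉ s) :
    growParts (card s) (shrinkParts s) = s := by
  have hbig : (s.filter (1 < ·)).map ((· + 1) ∘ (· - 1)) = s.filter (1 < ·) :=
    (map_congr rfl fun x hx => by have := (mem_filter.1 hx).2; simp; omega).trans (map_id _)
  have hones : s.filter (¬ 1 < ·) = replicate (card (s.filter (¬ 1 < ·))) 1 :=
    eq_replicate_card.2 fun x hx => by
      have := mem_filter.1 hx
      have : x ≠ 0 := fun h => hs (h ▸ this.1)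
      omega
  have hcard := congrArg card (filter_add_not (1 < ·) s)
  rw [card_add] at hcard
  conv_rhs => rw [← filter_add_not (1 < ·) s, hones]
  simp only [growParts, shrinkParts, map_map, hbig, card_map]
  congr 2
  omega

def exactPartsEquiv (n m : ℕ) :
    {π : (n + m).Partition // card π.parts = m} ≃ {σ : n.Partition // card σ.parts ≤ m} where
  toFun π := ⟨⟨shrinkParts π.1.parts,
      fun hi => Nat.pos_of_ne_zero fun h => zero_notMem_shrinkParts _ (h ▸ hi), by
        have := sum_growParts (card_shrinkParts_le π.1.parts)
        rw [growParts_shrinkParts fun h => (π.1.parts_pos h).false, π.1.parts_sum, π.2] at this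
        omega⟩,
    π.2 ▸ card_shrinkParts_le _⟩
  invFun σ := ⟨⟨growParts m σ.1.parts,
      fun hi => Nat.pos_of_ne_zero fun h => zero_notMem_growParts _ _ (h ▸ hi), by
        rw [sum_growParts σ.2, σ.1.parts_sum]⟩,
    card_growParts σ.2⟩
  left_inv π := by
    ext1; ext1
    simpa [π.2] using growParts_shrinkParts fun h => (π.1.parts_pos h).false
  right_inv σ := by
    ext1; ext1
    exact shrinkParts_growParts m fun h => (σ.1.parts_pos h).false

lemma card_parts_le_succ (n m : ℕ) :
    Nat.card {π : n.Partition // card π.parts ≤ m + 1} =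
      Nat.card {π : n.Partition // card π.parts = m + 1} +
        Nat.card {π : n.Partition // card π.parts ≤ m} := by
  rw [Nat.card_subtype_eq_card_and_add_card_and_not _ (fun π : n.Partition => card π.parts = m + 1)]
  congr 1 <;> exact Nat.card_congr (Equiv.subtypeEquivRight fun π => by omega)

lemma card_parts_le_one (n : ℕ) : Nat.card {π : n.Partition // card π.parts ≤ 1} = 1 := by
  refine Nat.card_eq_one_iff_exists.2 ⟨⟨indiscrete n, ?_⟩, fun π => ?_⟩
  · rcases eq_or_ne n 0 with rfl | hn
    · simp
    · simp [indiscrete_parts hn]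
  · obtain ⟨π, hπ⟩ := π
    ext1; ext1
    rcases Nat.le_one_iff_eq_zero_or_eq_one.1 hπ with h | h
    · have := π.parts_sum
      rw [Multiset.card_eq_zero.1 h, sum_zero] at this
      subst this
      simp
    · obtain ⟨b, hb⟩ := Multiset.card_eq_one.1 h
      have := π.parts_sum
      rw [hb, sum_singleton] at this
      subst this
      rw [hb, indiscrete_parts]
      exact (π.parts_pos (hb ▸ mem_singleton_self b)).ne'

lemma exists_parts_eq_cons_filter_le {n N : ℕ} {π : n.Partition} (hn : n ≤ 2 * N + 1)
    (h : ¬ ∀ i ∈ π.parts, i ≤ N) : ∃ b, N < b ∧ π.parts = b ::ₘ π.parts.filter (· ≤ N) := by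
  push Not at h
  obtain ⟨b, hb, hbN⟩ := h
  refine ⟨b, hbN, ?_⟩
  have hsum : b + (π.parts.erase b).sum = n := by rw [← sum_cons, cons_erase hb, π.parts_sum]
  have hrest : (π.parts.erase b).filter (· ≤ N) = π.parts.erase b :=
    filter_eq_self.2 fun x hx => by have := le_sum_of_mem hx; omega
  conv_lhs => rw [← cons_erase hb]
  conv_rhs => rw [← cons_erase hb, filter_cons_of_neg _ (by omega), hrest]

lemma sigma_ext_of_parts {K m : ℕ} {x y : Σ j : Fin K, {μ : (j : ℕ).Partition // card μ.parts ≤ m}}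
    (h : x.2.1.parts = y.2.1.parts) : x = y := by
  obtain ⟨⟨j, hj⟩, μ, hμ⟩ := x
  obtain ⟨⟨j', hj'⟩, μ', hμ'⟩ := y
  obtain rfl : j = j' := by simpa [μ.parts_sum, μ'.parts_sum] using congrArg sum h
  obtain rfl : μ = μ' := Nat.Partition.ext h
  rfl

def largePartEquiv {n N : ℕ} (hn : n ≤ 2 * N + 1) (m : ℕ) :
    {π : n.Partition // card π.parts ≤ m + 1 ∧ ¬ ∀ i ∈ π.parts, i ≤ N} ≃
      Σ j : Fin (n - N), {μ : (j : ℕ).Partition // card μ.parts ≤ m} where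
  toFun π :=
    have hπ := exists_parts_eq_cons_filter_le hn π.2.2
    ⟨⟨(π.1.parts.filter (· ≤ N)).sum, by
        obtain ⟨b, hbN, heq⟩ := hπ
        have := congrArg sum heq
        rw [π.1.parts_sum, sum_cons] at this
        omega⟩,
      ⟨⟨π.1.parts.filter (· ≤ N), fun hi => π.1.parts_pos (mem_of_mem_filter hi), rfl⟩, by
        obtain ⟨b, hbN, heq⟩ := hπ
        have := congrArg card heq
        rw [card_cons] at this
        have := π.2.1
        simp only
        omega⟩⟩
  invFun μ := ⟨⟨(n - μ.1) ::ₘ μ.2.1.parts,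
      fun hi => by
        rcases mem_cons.1 hi with rfl | hi
        · omega
        · exact μ.2.1.parts_pos hi,
      by rw [sum_cons, μ.2.1.parts_sum]; omega⟩,
    by rw [card_cons]; exact Nat.succ_le_succ μ.2.2,
    fun h => by have := h _ (mem_cons_self _ _); omega⟩
  left_inv π := by
    obtain ⟨b, hbN, heq⟩ := exists_parts_eq_cons_filter_le hn π.2.2
    have hsum := congrArg sum heq
    rw [π.1.parts_sum, sum_cons] at hsum
    ext1; ext1
    simp only
    rw [show n - (π.1.parts.filter (· ≤ N)).sum = b by omega, ← heq]
  right_inv μ := by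
    apply sigma_ext_of_parts
    simp only
    rw [filter_cons_of_neg _ (by omega)]
    exact filter_eq_self.2 fun x hx => by
      have := μ.2.1.le_of_mem_parts hx
      omega

lemma card_parts_le_succ_eq_card_add_sum {n N : ℕ} (hn : n ≤ 2 * N + 1) (m : ℕ) :
    Nat.card {π : n.Partition // card π.parts ≤ m + 1} =
      Nat.card {π : n.Partition // card π.parts ≤ m + 1 ∧ ∀ i ∈ π.parts, i ≤ N} +
        ∑ j ∈ Finset.range (n - N), Nat.card {μ : j.Partition // card μ.parts ≤ m} := by
  rw [Nat.card_subtype_eq_card_and_add_card_and_not _ (fun π : n.Partition => ∀ i ∈ π.parts, i ≤ N),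
    Nat.card_congr (largePartEquiv hn m), Nat.card_sigma,
    Fin.sum_univ_eq_sum_range (fun j => Nat.card {μ : j.Partition // card μ.parts ≤ m})]

end Nat.Partition

lemma pAtMost_natCast (n m : ℕ) :
    pAtMost n m = Nat.card {π : n.Partition // card π.parts ≤ m} := by
  simp [pAtMost]

lemma pAtMost_of_neg {n : ℤ} (h : n < 0) (m : ℕ) : pAtMost n m = 0 := by
  simp [pAtMost, h.not_ge]

lemma pAtMost_succ (n : ℤ) (m : ℕ) :
    pAtMost n (m + 1) = pAtMost (n - (m + 1)) (m + 1) + pAtMost n m := by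
  rcases lt_or_ge n 0 with hn | hn
  · simp [pAtMost_of_neg hn, pAtMost_of_neg (show n - (m + 1) < 0 by omega)]
  lift n to ℕ using hn
  rw [pAtMost_natCast, pAtMost_natCast, Nat.Partition.card_parts_le_succ]
  rcases lt_or_ge n (m + 1) with hlt | hge
  · have : IsEmpty {π : n.Partition // card π.parts = m + 1} :=
      ⟨fun π => by have := π.1.card_parts_le; omega⟩
    rw [Nat.card_of_isEmpty, pAtMost_of_neg (by omega)]
  · obtain ⟨k, rfl⟩ := Nat.exists_eq_add_of_le' hge
    rw [Nat.card_congr (Nat.Partition.exactPartsEquiv k (m + 1)),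
      show ((k + (m + 1) : ℕ) : ℤ) - (m + 1) = k by push_cast; ring, pAtMost_natCast]

lemma pAtMost_one (n : ℤ) : pAtMost n 1 = if 0 ≤ n then 1 else 0 := by
  split_ifs with hn
  · lift n to ℕ using hn
    rw [pAtMost_natCast, Nat.Partition.card_parts_le_one]
  · exact pAtMost_of_neg (not_le.1 hn) 1

lemma pBdd_of_neg {n : ℤ} (h : n < 0) (m N : ℕ) : pBdd n m N = 0 := by
  simp [pBdd, h.not_ge]

lemma pAtMost_eq_pBdd_add_sum {n N m k : ℕ} (hn : n ≤ 2 * N + 1) (hm : m = k + 1) :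
    pAtMost n m = pBdd n m N + ∑ j ∈ Finset.range (n - N), pAtMost j k := by
  subst hm
  simp only [pAtMost_natCast, pBdd, Nat.cast_nonneg, if_true, Int.toNat_natCast]
  exact Nat.Partition.card_parts_le_succ_eq_card_add_sum hn k

open PowerSeries

-- Coefficients are indexed by ℤ so that a shift n ↦ n - c needs no truncated subtraction.
noncomputable def intSeries (f : ℤ → ℤ) : ℤ⟦X⟧ := mk fun k => f k

lemma intSeries_add (f g : ℤ → ℤ) : intSeries (f + g) = intSeries f + intSeries g := by
  ext; simp [intSeries]

lemma X_pow_mul_intSeries {f : ℤ → ℤ} (hf : ∀ n < 0, f n = 0) (c : ℕ) :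
    X ^ c * intSeries f = intSeries fun n => f (n - c) := by
  ext k
  rw [coeff_X_pow_mul', intSeries, intSeries, coeff_mk, coeff_mk]
  split_ifs with h
  · push_cast [h]; rfl
  · rw [hf _ (by omega)]

lemma intSeries_mul_one_sub_X_pow {f : ℤ → ℤ} (hf : ∀ n < 0, f n = 0) (c : ℕ) :
    intSeries f * (1 - X ^ c) = intSeries fun n => f n - f (n - c) := by
  rw [mul_sub, mul_one, mul_comm, X_pow_mul_intSeries hf]
  ext; simp [intSeries]

lemma intSeries_mul_one_sub_X_of_step {f : ℤ → ℤ} (hf : ∀ n, f n = if 0 ≤ n then 1 else 0) :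
    intSeries f * (1 - X) = 1 := by
  rw [← pow_one X, intSeries_mul_one_sub_X_pow (fun n hn => by simp [hf, hn.not_ge])]
  ext k
  simp only [intSeries, coeff_mk, coeff_one, hf]
  split_ifs <;> omega

lemma intSeries_cumsum_mul_one_sub_X {f : ℤ → ℤ} (hf : ∀ n < 0, f n = 0) :
    intSeries (fun n => ∑ i ∈ Finset.range n.toNat, f i) * (1 - X) = X * intSeries f := by
  rw [← pow_one X, intSeries_mul_one_sub_X_pow (fun n hn => by simp [Int.toNat_of_nonpos hn.le]),
    X_pow_mul_intSeries hf]
  congr 1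
  funext n
  rcases le_or_gt n 0 with hn | hn
  · simp [Int.toNat_of_nonpos hn, Int.toNat_of_nonpos (show n - 1 ≤ 0 by omega),
      hf (n - 1) (by omega)]
  · rw [show n.toNat = (n - 1).toNat + 1 by omega, Finset.sum_range_succ]
    push_cast
    rw [Int.toNat_of_nonneg (by omega)]
    ring

lemma pAtMost_sub_pAtMost {n n' : ℤ} {m k : ℕ} (hm : m = k + 1) (hn : n' = n - m) :
    (pAtMost n m : ℤ) - pAtMost n' m = pAtMost n k := by
  subst hm hn
  rw [pAtMost_succ n k]
  push_cast
  ring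

lemma intSeries_pAtMost_mul {m k : ℕ} (hm : m = k + 1) :
    (intSeries fun n => (pAtMost n m : ℤ)) * (1 - X ^ m) = intSeries fun n => pAtMost n k := by
  rw [intSeries_mul_one_sub_X_pow fun n hn => by simp [pAtMost_of_neg hn]]
  congr 1
  funext n
  exact pAtMost_sub_pAtMost hm rfl

lemma intSeries_pAtMost_section_mul {m k d : ℕ} (hm : m = k + 1) (hd : m = 2 * d) {r : ℤ}
    (hr : r ≤ 1) :
    (intSeries fun j => (pAtMost (2 * j + r) m : ℤ)) * (1 - X ^ d) =
      intSeries fun j => pAtMost (2 * j + r) k := by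
  rw [intSeries_mul_one_sub_X_pow fun j hj => by
    simp [pAtMost_of_neg (show 2 * j + r < 0 by omega)]]
  congr 1
  funext j
  exact pAtMost_sub_pAtMost hm (by rw [hd]; push_cast; ring)

lemma intSeries_pAtMost_one_section_mul {r : ℤ} (hr0 : 0 ≤ r) (hr1 : r ≤ 1) :
    (intSeries fun j => (pAtMost (2 * j + r) 1 : ℤ)) * (1 - X) = 1 :=
  intSeries_mul_one_sub_X_of_step fun j => by
    rw [pAtMost_one]
    split_ifs <;> first | rfl | omega

lemma intSeries_odd_pAtMost_three_mul :
    (intSeries fun j => (pAtMost (2 * j + 1) 3 : ℤ)) * (1 - X ^ 3) =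
      (intSeries fun j => (pAtMost (2 * j + 1) 2 : ℤ)) +
        X * intSeries fun j => (pAtMost (2 * j) 2 : ℤ) := by
  rw [intSeries_mul_one_sub_X_pow fun j hj => by
      simp [pAtMost_of_neg (show 2 * j + 1 < 0 by omega)],
    ← pow_one X, X_pow_mul_intSeries fun j hj => by simp [pAtMost_of_neg (show 2 * j < 0 by omega)],
    ← intSeries_add]
  congr 1
  funext j
  simp only [Pi.add_apply, Nat.cast_one]
  linear_combination (pAtMost_sub_pAtMost (n := 2 * j + 1) (n' := 2 * (j - 1)) (k := 2) rfl
      (by push_cast; ring)) +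
    pAtMost_sub_pAtMost (n := 2 * (j - 1)) (n' := 2 * (j - 3) + 1) (k := 2) rfl (by push_cast; ring)

lemma intSeries_odd_pAtMost_four_mul :
    (intSeries fun j => (pAtMost (2 * j + 1) 4 : ℤ)) * ((1 - X) ^ 2 * (1 - X ^ 2) * (1 - X ^ 3)) =
      1 + X := by
  have h4 := intSeries_pAtMost_section_mul (m := 4) (k := 3) (d := 2) rfl rfl (r := 1) le_rfl
  have h3 := intSeries_odd_pAtMost_three_mul
  have hodd := intSeries_pAtMost_section_mul (m := 2) (k := 1) (d := 1) rfl rfl (r := 1) le_rfl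
  have heven :=
    intSeries_pAtMost_section_mul (m := 2) (k := 1) (d := 1) rfl rfl (r := 0) zero_le_one
  have hodd1 := intSeries_pAtMost_one_section_mul (r := 1) zero_le_one le_rfl
  have heven1 := intSeries_pAtMost_one_section_mul (r := 0) le_rfl zero_le_one
  simp only [add_zero, pow_one] at heven hodd hodd1 heven1
  linear_combination (1 - X) ^ 2 * (1 - X ^ 3) * h4 + (1 - X) ^ 2 * h3 + (1 - X) * hodd + hodd1 +
    X * (1 - X) * heven + X * heven1

lemma intSeries_cumsum_pAtMost_three_mul :
    (intSeries fun n => ∑ i ∈ Finset.range n.toNat, (pAtMost i 3 : ℤ)) *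
      ((1 - X) ^ 2 * (1 - X ^ 2) * (1 - X ^ 3)) = X := by
  have hC := intSeries_cumsum_mul_one_sub_X (f := fun n => (pAtMost n 3 : ℤ))
    fun n hn => by simp [pAtMost_of_neg hn]
  have h3 := intSeries_pAtMost_mul (m := 3) (k := 2) rfl
  have h2 := intSeries_pAtMost_mul (m := 2) (k := 1) rfl
  have h1 := intSeries_mul_one_sub_X_of_step (f := fun n => (pAtMost n 1 : ℤ))
    fun n => by rw [pAtMost_one]; split_ifs <;> rfl
  linear_combination (1 - X) * (1 - X ^ 2) * (1 - X ^ 3) * hC + X * (1 - X) * (1 - X ^ 2) * h3 +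
    X * (1 - X) * h2 + X * h1

lemma mk_pBdd_eq (a : ℕ) :
    (mk fun N : ℕ => (pBdd (2 * (N : ℤ) - (2 * a + 1)) 4 N : ℤ)) =
      X ^ (a + 1) * (intSeries fun j => (pAtMost (2 * j + 1) 4 : ℤ)) -
        X ^ (2 * a + 1) * intSeries fun n => ∑ i ∈ Finset.range n.toNat, (pAtMost i 3 : ℤ) := by
  rw [X_pow_mul_intSeries fun j hj => by simp [pAtMost_of_neg (show 2 * j + 1 < 0 by omega)],
    X_pow_mul_intSeries fun n hn => by simp [Int.toNat_of_nonpos hn.le]]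
  ext N
  simp only [intSeries, coeff_mk, map_sub]
  rcases lt_or_ge N (a + 1) with hN | hN
  · rw [pBdd_of_neg (by omega), pAtMost_of_neg (by omega), Int.toNat_of_nonpos (by omega)]
    simp
  · obtain ⟨n, hn⟩ : ∃ n : ℕ, 2 * (N : ℤ) - (2 * a + 1) = n := ⟨2 * N - (2 * a + 1), by omega⟩
    have key := pAtMost_eq_pBdd_add_sum (n := n) (N := N) (k := 3) (by omega) rfl
    rw [hn, show 2 * ((N : ℤ) - (a + 1 : ℕ)) + 1 = n by push_cast; omega,
      show ((N : ℤ) - (2 * a + 1 : ℕ)).toNat = n - N by omega, key]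
    push_cast
    ring

/-- `∑_{N≥0} p(2N-(2a+1),4,N) z^N = z^{a+1}(1+z-z^{a+1}) / ((1-z)^2 (1-z^2)(1-z^3))`. -/
theorem stmt4 (a : ℕ) :
    (PowerSeries.mk fun N : ℕ => (pBdd (2 * (N : ℤ) - (2 * a + 1)) 4 N : ℤ)) *
      ((1 - X) ^ 2 * (1 - X ^ 2) * (1 - X ^ 3)) =
    X ^ (a + 1) * (1 + X - X ^ (a + 1)) := by
  rw [mk_pBdd_eq]
  linear_combination X ^ (a + 1) * intSeries_odd_pAtMost_four_mul -
    X ^ (2 * a + 1) * intSeries_cumsum_pAtMost_three_mul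
end

section
/- The generating function identity ∑_{N≥0} p(2N - 1, 4, N) z^N = z / ((1-z)^2 (1-z^2)(1-z^3)) holds as an identity of formal power series. -/
/-!
A partition of `2n + 1` into at most four parts, each at most `n + 1`, padded with zeros, is a
quadruple `a ≥ b ≥ c ≥ d ≥ 0` with `a + b + c + d = 2n + 1` and `a ≤ n + 1`. An explicit two-case
map identifies these quadruples with the solutions of `i + j + 2k + 3l = n`. Adjoining a coordinate
of weight `w` to a weight function divides its generating function by `1 - z^w`, so these solutions
have generating function `1 / ((1 - z)^2 (1 - z^2) (1 - z^3))`; the shift `n ↦ n + 1` gives the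
factor `z`.
-/

open PowerSeries

section WeightGenFun

variable (R : Type*) [CommRing R] {α : Type*}

def consWeight (w : ℕ) (g : α → ℕ) (p : ℕ × α) : ℕ := w * p.1 + g p.2

noncomputable def weightGenFun (g : α → ℕ) : R⟦X⟧ :=
  mk fun m => ((g ⁻¹' {m}).ncard : R)

variable {R} {g : α → ℕ} {w : ℕ}

lemma finite_consWeight_fiber (hg : ∀ m, (g ⁻¹' {m}).Finite) (hw : 0 < w) (m : ℕ) :
    (consWeight w g ⁻¹' {m}).Finite := by
  refine ((Set.finite_Iic m).prod ((Set.finite_Iic m).biUnion fun k _ => hg k)).subset ?_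
  rintro ⟨l, x⟩ h
  simp only [Set.mem_preimage, Set.mem_singleton_iff, consWeight] at h
  simp only [Set.mem_prod, Set.mem_Iic, Set.mem_iUnion, Set.mem_preimage,
    Set.mem_singleton_iff, exists_prop, exists_eq_right']
  constructor <;> nlinarith

lemma ncard_consWeight_fiber (hg : ∀ m, (g ⁻¹' {m}).Finite) (hw : 0 < w) (m : ℕ) :
    (consWeight w g ⁻¹' {m}).ncard =
      (g ⁻¹' {m}).ncard + if w ≤ m then (consWeight w g ⁻¹' {m - w}).ncard else 0 := by
  have hsplit : consWeight w g ⁻¹' {m} =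
      Prod.mk 0 '' (g ⁻¹' {m}) ∪ Prod.map Nat.succ id '' {p | consWeight w g p + w = m} := by
    ext ⟨l, x⟩
    cases l <;> simp [consWeight, mul_add, add_right_comm]
  have hshift : {p | consWeight w g p + w = m}.ncard =
      if w ≤ m then (consWeight w g ⁻¹' {m - w}).ncard else 0 := by
    split_ifs with hwm
    · congr 1
      ext p
      simp only [Set.mem_ofPred_eq, Set.mem_preimage, Set.mem_singleton_iff]
      omega
    · convert Set.ncard_empty (ℕ × α)
      ext p
      simp only [Set.mem_ofPred_eq, Set.mem_empty_iff_false, iff_false]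
      omega
  have hfin : {p | consWeight w g p + w = m}.Finite :=
    (finite_consWeight_fiber hg hw (m - w)).subset fun p hp => by
      simp only [Set.mem_ofPred_eq] at hp
      simp only [Set.mem_preimage, Set.mem_singleton_iff]
      omega
  have hdisj : Disjoint (Prod.mk 0 '' (g ⁻¹' {m}))
      (Prod.map Nat.succ id '' {p | consWeight w g p + w = m}) := by
    rw [Set.disjoint_left]
    rintro _ ⟨x, -, rfl⟩ ⟨p, -, hp⟩
    exact Nat.succ_ne_zero _ (congrArg Prod.fst hp)
  rw [hsplit, Set.ncard_union_eq hdisj ((hg m).image _) (hfin.image _),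
    Set.ncard_image_of_injective _ (Prod.mk_right_injective 0),
    Set.ncard_image_of_injective _ (Nat.succ_injective.prodMap Function.injective_id), hshift]

theorem weightGenFun_consWeight_mul (hg : ∀ m, (g ⁻¹' {m}).Finite) (hw : 0 < w) :
    weightGenFun R (consWeight w g) * (1 - X ^ w) = weightGenFun R g := by
  ext m
  rw [weightGenFun, weightGenFun, mul_sub, mul_one, map_sub, coeff_mul_X_pow', coeff_mk, coeff_mk,
    ncard_consWeight_fiber hg hw]
  split_ifs <;> simp

variable (R)

lemma weightGenFun_id_mul : weightGenFun R (id : ℕ → ℕ) * (1 - X) = 1 := by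
  convert mk_one_mul_one_sub_eq_one R
  ext m
  simp [weightGenFun]

-- `weight4 (l, k, j, i) = 3 * l + 2 * k + j + i`
def weight4 : ℕ × ℕ × ℕ × ℕ → ℕ := consWeight 3 (consWeight 2 (consWeight 1 id))

theorem weightGenFun_weight4_mul :
    weightGenFun R weight4 * ((1 - X) ^ 2 * (1 - X ^ 2) * (1 - X ^ 3)) = 1 := by
  have hid : ∀ m, ((id : ℕ → ℕ) ⁻¹' {m}).Finite := fun m => by simp
  have h1 := finite_consWeight_fiber hid one_pos
  have h2 := finite_consWeight_fiber h1 two_pos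
  calc weightGenFun R weight4 * ((1 - X) ^ 2 * (1 - X ^ 2) * (1 - X ^ 3))
      = weightGenFun R weight4 * (1 - X ^ 3) * (1 - X ^ 2) * (1 - X ^ 1) * (1 - X) := by ring
    _ = 1 := by
      rw [weight4, weightGenFun_consWeight_mul h2 three_pos,
        weightGenFun_consWeight_mul h1 two_pos, weightGenFun_consWeight_mul hid one_pos,
        weightGenFun_id_mul]

end WeightGenFun

section SortedQuads

def sortedQuads (n N : ℕ) : Set (ℕ × ℕ × ℕ × ℕ) :=
  {x | x.2.2.2 ≤ x.2.2.1 ∧ x.2.2.1 ≤ x.2.1 ∧ x.2.1 ≤ x.1 ∧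
    x.1 + x.2.1 + x.2.2.1 + x.2.2.2 = n ∧ x.1 ≤ N}

def quadParts (x : ℕ × ℕ × ℕ × ℕ) : Multiset ℕ := {x.1, x.2.1, x.2.2.1, x.2.2.2}

lemma Multiset.filter_ne_zero_add_replicate (s : Multiset ℕ) :
    s.filter (· ≠ 0) + Multiset.replicate (card s - card (s.filter (· ≠ 0))) 0 = s := by
  have hs := Multiset.filter_add_not (· ≠ 0) s
  simp only [ne_eq, not_not, Multiset.filter_eq'] at hs ⊢
  have hcard := congrArg Multiset.card hs
  rw [Multiset.card_add, Multiset.card_replicate] at hcard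
  rwa [hcard.symm, Nat.add_sub_cancel_left]

lemma pairwise_ge_quad_iff {a b c d : ℕ} :
    [a, b, c, d].Pairwise (· ≥ ·) ↔ d ≤ c ∧ c ≤ b ∧ b ≤ a := by
  simp only [ge_iff_le, List.pairwise_cons, List.mem_cons, List.not_mem_nil, or_false,
    forall_eq_or_imp, forall_eq, IsEmpty.forall_iff, implies_true, List.Pairwise.nil, and_self,
    and_true]
  omega

lemma eq_of_filter_quadParts_eq {x y : ℕ × ℕ × ℕ × ℕ}
    (hx : x.2.2.2 ≤ x.2.2.1 ∧ x.2.2.1 ≤ x.2.1 ∧ x.2.1 ≤ x.1)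
    (hy : y.2.2.2 ≤ y.2.2.1 ∧ y.2.2.1 ≤ y.2.1 ∧ y.2.1 ≤ y.1)
    (h : (quadParts x).filter (· ≠ 0) = (quadParts y).filter (· ≠ 0)) : x = y := by
  have hxy : quadParts x = quadParts y := by
    rw [← (quadParts x).filter_ne_zero_add_replicate,
      ← (quadParts y).filter_ne_zero_add_replicate, h]
    rfl
  obtain ⟨a, b, c, d⟩ := x
  obtain ⟨a', b', c', d'⟩ := y
  have hl : [a, b, c, d] = [a', b', c', d'] :=
    List.Perm.eq_of_pairwise' (pairwise_ge_quad_iff.mpr hx) (pairwise_ge_quad_iff.mpr hy)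
      (Multiset.coe_eq_coe.mp hxy)
  simpa using hl

lemma exists_mem_sortedQuads_filter_quadParts {n N : ℕ} (π : n.Partition)
    (hcard : Multiset.card π.parts ≤ 4) (hN : ∀ i ∈ π.parts, i ≤ N) :
    ∃ x ∈ sortedQuads n N, (quadParts x).filter (· ≠ 0) = π.parts := by
  set s := π.parts + Multiset.replicate (4 - Multiset.card π.parts) 0
  have hlen : (s.sort (· ≥ ·)).length = 4 := by
    rw [Multiset.length_sort, Multiset.card_add, Multiset.card_replicate]
    omega
  obtain ⟨a, b, c, d, habcd⟩ := List.length_eq_four.mp hlen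
  have hsorted := Multiset.pairwise_sort s (· ≥ ·)
  rw [habcd, pairwise_ge_quad_iff] at hsorted
  have hquad : quadParts (a, b, c, d) = s := by
    rw [← Multiset.sort_eq s (· ≥ ·), habcd]
    rfl
  have hsum : a + b + c + d = n := by
    have := congrArg Multiset.sum hquad
    simp only [quadParts, Multiset.insert_eq_cons, Multiset.sum_cons, Multiset.sum_singleton,
      Multiset.sum_add, π.parts_sum, Multiset.sum_replicate, nsmul_zero, add_zero, s] at this
    omega
  have haN : a ≤ N := by
    have ha : a ∈ quadParts (a, b, c, d) := by simp [quadParts]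
    rw [hquad, Multiset.mem_add, Multiset.mem_replicate] at ha
    exact ha.elim (hN a) fun h => h.2.le.trans (Nat.zero_le N)
  refine ⟨(a, b, c, d), ⟨hsorted.1, hsorted.2.1, hsorted.2.2, hsum, haN⟩, ?_⟩
  rw [hquad, Multiset.filter_add, Multiset.filter_eq_self.mpr fun i hi => (π.parts_pos hi).ne',
    Multiset.filter_eq_nil.mpr fun i hi => not_not.mpr (Multiset.eq_of_mem_replicate hi),
    add_zero]

lemma ncard_sortedQuads (n N : ℕ) :
    (sortedQuads n N).ncard =
      Nat.card {π : n.Partition // Multiset.card π.parts ≤ 4 ∧ ∀ i ∈ π.parts, i ≤ N} := by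
  rw [← Nat.card_coe_set_eq]
  refine Nat.card_eq_of_bijective
    (fun x => ⟨Nat.Partition.ofSums n (quadParts x) ?_, ?_, ?_⟩) ⟨?_, ?_⟩
  · obtain ⟨⟨a, b, c, d⟩, -, -, -, hsum, -⟩ := x
    simp only [quadParts, Multiset.insert_eq_cons, Multiset.sum_cons, Multiset.sum_singleton,
      ← hsum]
    ring
  · rw [Nat.Partition.ofSums_parts]
    exact (Multiset.card_le_card (Multiset.filter_le _ _)).trans le_rfl
  · obtain ⟨⟨a, b, c, d⟩, hdc, hcb, hba, -, haN⟩ := x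
    intro i hi
    simp only [Nat.Partition.ofSums_parts, Multiset.mem_filter, quadParts,
      Multiset.insert_eq_cons, Multiset.mem_cons, Multiset.mem_singleton] at hi
    dsimp only at hdc hcb hba haN
    rcases hi.1 with rfl | rfl | rfl | rfl <;> omega
  · rintro ⟨x, hx⟩ ⟨y, hy⟩ h
    exact Subtype.ext (eq_of_filter_quadParts_eq ⟨hx.1, hx.2.1, hx.2.2.1⟩
      ⟨hy.1, hy.2.1, hy.2.2.1⟩ (congrArg (fun π => π.1.parts) h))
  · rintro ⟨π, hcard, hN⟩
    obtain ⟨x, hx, hparts⟩ := exists_mem_sortedQuads_filter_quadParts π hcard hN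
    exact ⟨⟨x, hx⟩, Subtype.ext (Nat.Partition.ext hparts)⟩

-- The inverse on `sortedQuads (2 * n + 1) (n + 1)`: with `e = n + 1 - a`, the first case is
-- `e ≤ d`, where `(l, k, j, i) = (d - e, e, c - d, b - d)`; otherwise
-- `(l, k, j, i) = (e - d - 1, d, a - c + 1, a - b)`.
def quadOfWeight4 : ℕ × ℕ × ℕ × ℕ → ℕ × ℕ × ℕ × ℕ
  | (l, k, j, i) =>
    if j ≤ i then (i + j + k + 3 * l + 1, i + k + l, j + k + l, k + l)
    else (i + j + k + 2 * l, j + k + 2 * l, i + k + 2 * l + 1, k)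

lemma ncard_weight4_fiber (n : ℕ) :
    (weight4 ⁻¹' {n}).ncard = (sortedQuads (2 * n + 1) (n + 1)).ncard := by
  refine Set.ncard_congr (fun y _ => quadOfWeight4 y) ?_ ?_ ?_
  · rintro ⟨l, k, j, i⟩ h
    simp only [Set.mem_preimage, Set.mem_singleton_iff, weight4, consWeight, id] at h
    simp only [quadOfWeight4]
    split_ifs <;> simp only [sortedQuads, Set.mem_ofPred_eq] <;> omega
  · rintro ⟨l, k, j, i⟩ ⟨l', k', j', i'⟩ h h' he
    simp only [Set.mem_preimage, Set.mem_singleton_iff, weight4, consWeight, id] at h h'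
    simp only [quadOfWeight4] at he
    split_ifs at he <;> simp only [Prod.mk.injEq] at he ⊢ <;> omega
  · rintro ⟨a, b, c, d⟩ ⟨hdc, hcb, hba, hsum, haN⟩
    dsimp only at hdc hcb hba hsum haN
    by_cases hd : n + 1 - a ≤ d
    · refine ⟨(d - (n + 1 - a), n + 1 - a, c - d, b - d), ?_, ?_⟩
      · simp only [Set.mem_preimage, Set.mem_singleton_iff, weight4, consWeight, id]
        omega
      · simp only [quadOfWeight4]
        split_ifs <;> simp only [Prod.mk.injEq] <;> omega
    · refine ⟨(n - a - d, d, a - c + 1, a - b), ?_, ?_⟩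
      · simp only [Set.mem_preimage, Set.mem_singleton_iff, weight4, consWeight, id]
        omega
      · simp only [quadOfWeight4]
        split_ifs
        · omega
        · simp only [Prod.mk.injEq]
          exact ⟨by omega, by omega, by omega, trivial⟩

end SortedQuads

lemma pBdd_natCast (n m N : ℕ) :
    pBdd n m N =
      Nat.card {π : n.Partition // Multiset.card π.parts ≤ m ∧ ∀ i ∈ π.parts, i ≤ N} := by
  simp [pBdd]

/-- `∑_{N≥0} p(2N-1,4,N) z^N = z / ((1-z)^2 (1-z^2)(1-z^3))`. -/
theorem stmt6 :
    (PowerSeries.mk fun N : ℕ => (pBdd (2 * (N : ℤ) - 1) 4 N : ℤ)) *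
      ((1 - X) ^ 2 * (1 - X ^ 2) * (1 - X ^ 3)) =
    X := by
  have hseries : (PowerSeries.mk fun N : ℕ => (pBdd (2 * (N : ℤ) - 1) 4 N : ℤ)) =
      X * weightGenFun ℤ weight4 := by
    ext (_ | n)
    · simp [pBdd]
    · have hcast : 2 * ((n + 1 : ℕ) : ℤ) - 1 = ((2 * n + 1 : ℕ) : ℤ) := by push_cast; ring
      rw [coeff_mk, coeff_succ_X_mul, weightGenFun, coeff_mk, hcast, pBdd_natCast,
        ← ncard_sortedQuads, ncard_weight4_fiber]
  rw [hseries, mul_assoc, weightGenFun_weight4_mul, mul_one]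
end
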